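/- Fix β > 0, 0 < α < 1 and c > 0, and let (G_n) be any sequence of finite simple graphs, where G_n has n vertices and maximum cut C_max(G_n) ≥ c·n². Then under the Gibbs measure P_β on {±1}^n associated to G_n, the probability of sampling a cut exceeding α·C_max(G_n) tends to 1 as n → ∞; quantitatively, P_β( C(σ) ≤ α·C_max(G_n) ) ≤ exp( n·ln 2 − β(1−α)·c·n² ), which tends to 0 as n → ∞ (and in particular is eventually at most exp(−ε n²) for every 0 < ε < β(1−α)c). -/

import Mathlib

/-!
Compared with a maximum cut configuration, every configuration with `C(σ) ≤ α·C_max` has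
Gibbs weight smaller by a factor `e^{-β(1-α)C_max}`, and there are only `2ⁿ` configurations.
Hence the bad event has probability at most `2ⁿ e^{-β(1-α)C_max} ≤ e^{n ln 2 - β(1-α)cn²}`,
and the quadratic term in the exponent beats the linear one.
-/

open Finset Filter

/-- `spinDiff σ e = true` iff the two endpoints of the unordered pair `e` carry
opposite spins under the spin configuration `σ : {±1}ⁿ` (encoded by `Bool`). -/
def spinDiff {n : ℕ} (σ : Fin n → Bool) : Sym2 (Fin n) → Bool :=
  Sym2.lift ⟨fun i j => xor (σ i) (σ j), fun _ _ => Bool.xor_comm _ _⟩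

open Classical in
/-- The cut value `C(σ)` of a spin configuration `σ ∈ {±1}ⁿ` for the graph `G`:
the number of edges of `G` whose endpoints carry opposite spins. -/
noncomputable def gCut {n : ℕ} (G : SimpleGraph (Fin n)) (σ : Fin n → Bool) : ℕ :=
  (Finset.univ.filter
    (fun e : Sym2 (Fin n) => e ∈ G.edgeSet ∧ spinDiff σ e = true)).card

/-- The maximum cut value `C_max(G)` of the graph `G`. -/
noncomputable def maxCut {n : ℕ} (G : SimpleGraph (Fin n)) : ℕ :=
  Finset.univ.sup (fun σ : Fin n → Bool => gCut G σ)

open Classical in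
/-- The Gibbs probability at inverse temperature `β` of an event `A` on spin
configurations: `P_β(A) = (∑_{σ ∈ A} e^{β C(σ)}) / (∑_σ e^{β C(σ)})`. -/
noncomputable def gibbsProb {n : ℕ} (G : SimpleGraph (Fin n)) (β : ℝ)
    (A : (Fin n → Bool) → Prop) : ℝ :=
  (∑ σ ∈ Finset.univ.filter A, Real.exp (β * gCut G σ)) /
    (∑ σ : Fin n → Bool, Real.exp (β * gCut G σ))

open Real

theorem sum_filter_exp_div_sum_exp_le {ι : Type*} [Fintype ι] (f : ι → ℝ) {β t : ℝ}
    (hβ : 0 ≤ β) (i₀ : ι) [DecidablePred fun i => f i ≤ t] :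
    (∑ i ∈ univ.filter (fun i => f i ≤ t), exp (β * f i)) / ∑ i, exp (β * f i) ≤
      Fintype.card ι * exp (β * (t - f i₀)) := by
  have hi₀ : exp (β * f i₀) ≤ ∑ i, exp (β * f i) :=
    single_le_sum (f := fun i => exp (β * f i)) (fun _ _ => (exp_pos _).le) (mem_univ i₀)
  rw [div_le_iff₀ ((exp_pos _).trans_le hi₀)]
  calc ∑ i ∈ univ.filter (fun i => f i ≤ t), exp (β * f i)
      ≤ #(univ.filter fun i => f i ≤ t) • exp (β * t) :=
        sum_le_card_nsmul _ _ _ fun i hi =>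
          exp_le_exp.mpr (mul_le_mul_of_nonneg_left (mem_filter.mp hi).2 hβ)
    _ ≤ Fintype.card ι * exp (β * t) := by
        rw [nsmul_eq_mul]
        gcongr
        exact_mod_cast card_le_univ _
    _ = Fintype.card ι * exp (β * (t - f i₀)) * exp (β * f i₀) := by
        rw [mul_assoc, ← exp_add]
        ring_nf
    _ ≤ Fintype.card ι * exp (β * (t - f i₀)) * ∑ i, exp (β * f i) := by
        gcongr

theorem exists_gCut_eq_maxCut {n : ℕ} (G : SimpleGraph (Fin n)) :
    ∃ σ, gCut G σ = maxCut G := by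
  obtain ⟨σ, -, hσ⟩ := exists_mem_eq_sup univ univ_nonempty (gCut G)
  exact ⟨σ, hσ.symm⟩

theorem gibbsProb_nonneg {n : ℕ} (G : SimpleGraph (Fin n)) (β : ℝ)
    (A : (Fin n → Bool) → Prop) : 0 ≤ gibbsProb G β A :=
  div_nonneg (sum_nonneg fun _ _ => (exp_pos _).le) (sum_nonneg fun _ _ => (exp_pos _).le)

theorem gibbsProb_gCut_le_le {n : ℕ} (G : SimpleGraph (Fin n)) {β : ℝ} (hβ : 0 ≤ β) (t : ℝ) :
    gibbsProb G β (fun σ => (gCut G σ : ℝ) ≤ t) ≤ 2 ^ n * exp (β * (t - maxCut G)) := by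
  obtain ⟨σ₀, hσ₀⟩ := exists_gCut_eq_maxCut G
  simpa [gibbsProb, hσ₀] using
    sum_filter_exp_div_sum_exp_le (fun σ => (gCut G σ : ℝ)) hβ (t := t) σ₀

theorem gibbsProb_gCut_le_mul_maxCut_le {n : ℕ} (G : SimpleGraph (Fin n)) {β α c : ℝ}
    (hβ : 0 ≤ β) (hα : α ≤ 1) (hG : c * (n : ℝ) ^ 2 ≤ maxCut G) :
    gibbsProb G β (fun σ => (gCut G σ : ℝ) ≤ α * maxCut G) ≤
      exp (n * log 2 - β * (1 - α) * c * (n : ℝ) ^ 2) := by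
  have h2 : (2 : ℝ) ^ n = exp (n * log 2) := by rw [exp_nat_mul, exp_log two_pos]
  refine (gibbsProb_gCut_le_le G hβ _).trans ?_
  rw [h2, ← exp_add, exp_le_exp]
  have : β * (1 - α) * (c * (n : ℝ) ^ 2) ≤ β * (1 - α) * maxCut G :=
    mul_le_mul_of_nonneg_left hG (mul_nonneg hβ (sub_nonneg.mpr hα))
  linarith

theorem eventually_mul_sub_mul_sq_le (a : ℝ) {K ε : ℝ} (hεK : ε < K) :
    ∀ᶠ n : ℕ in atTop, n * a - K * (n : ℝ) ^ 2 ≤ -ε * (n : ℝ) ^ 2 := by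
  have h : ∀ᶠ n : ℕ in atTop, a ≤ (K - ε) * n :=
    (tendsto_natCast_atTop_atTop.const_mul_atTop (sub_pos.mpr hεK)).eventually_ge_atTop a
  filter_upwards [h] with n hn
  nlinarith [mul_le_mul_of_nonneg_left hn (Nat.cast_nonneg n : (0 : ℝ) ≤ n)]

theorem tendsto_exp_neg_mul_natCast_sq {ε : ℝ} (hε : 0 < ε) :
    Tendsto (fun n : ℕ => exp (-ε * (n : ℝ) ^ 2)) atTop (nhds 0) := by
  have hsq : Tendsto (fun n : ℕ => (n : ℝ) ^ 2) atTop atTop :=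
    (tendsto_pow_atTop two_ne_zero).comp tendsto_natCast_atTop_atTop
  exact tendsto_exp_atBot.comp (hsq.const_mul_atTop_of_neg (neg_neg_of_pos hε))

theorem gibbs_beats_threshold_quadratic_general (β α c : ℝ) (hβ : 0 < β)
    (hα1 : α < 1) (hc : 0 < c) (G : ∀ n : ℕ, SimpleGraph (Fin n))
    (hG : ∀ᶠ n : ℕ in Filter.atTop, c * (n : ℝ) ^ 2 ≤ (maxCut (G n) : ℝ)) :
    (∀ᶠ n : ℕ in Filter.atTop,
        gibbsProb (G n) β (fun σ => (gCut (G n) σ : ℝ) ≤ α * (maxCut (G n) : ℝ)) ≤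
          Real.exp ((n : ℝ) * Real.log 2 - β * (1 - α) * c * (n : ℝ) ^ 2)) ∧
      Filter.Tendsto
        (fun n : ℕ =>
          gibbsProb (G n) β (fun σ => (gCut (G n) σ : ℝ) ≤ α * (maxCut (G n) : ℝ)))
        Filter.atTop (nhds 0) ∧
      ∀ ε : ℝ, 0 < ε → ε < β * (1 - α) * c →
        ∀ᶠ n : ℕ in Filter.atTop,
          gibbsProb (G n) β (fun σ => (gCut (G n) σ : ℝ) ≤ α * (maxCut (G n) : ℝ)) ≤
            Real.exp (-ε * (n : ℝ) ^ 2) := by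
  have bound := hG.mono fun n hn => gibbsProb_gCut_le_mul_maxCut_le (G n) hβ.le hα1.le hn
  have decay : ∀ ε : ℝ, ε < β * (1 - α) * c → ∀ᶠ n : ℕ in atTop,
      gibbsProb (G n) β (fun σ => (gCut (G n) σ : ℝ) ≤ α * (maxCut (G n) : ℝ)) ≤
        exp (-ε * (n : ℝ) ^ 2) := fun ε hε => by
    filter_upwards [bound, eventually_mul_sub_mul_sq_le (log 2) hε] with n hbound hexp
    exact hbound.trans (exp_le_exp.mpr hexp)
  have hK : 0 < β * (1 - α) * c := by have := sub_pos.mpr hα1; positivity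
  refine ⟨bound, ?_, fun ε _ hε => decay ε hε⟩
  exact squeeze_zero' (.of_forall fun n => gibbsProb_nonneg _ _ _)
    (decay _ (half_lt_self hK)) (tendsto_exp_neg_mul_natCast_sq (half_pos hK))

/-- Fix `β > 0`, `0 < α < 1`, `c > 0`, and a sequence of
graphs `G n` on `n` vertices whose maximum cut satisfies `C_max(G n) ≥ c·n²`
(for all large `n`; requiring it for every `n` would be vacuous since graphs on
one vertex have no edges).  Then
`P_β(C(σ) ≤ α·C_max(G n)) ≤ exp(n·ln 2 - β(1-α)·c·n²)`, which tends to `0` as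
`n → ∞` (so the probability of sampling a cut exceeding `α·C_max(G n)` tends
to `1`), and in particular is eventually at most `exp(-ε n²)` for every
`0 < ε < β(1-α)c`. -/
theorem gibbs_beats_threshold_quadratic (β α c : ℝ) (hβ : 0 < β) (hα0 : 0 < α)
    (hα1 : α < 1) (hc : 0 < c) (G : ∀ n : ℕ, SimpleGraph (Fin n))
    (hG : ∀ᶠ n : ℕ in Filter.atTop, c * (n : ℝ) ^ 2 ≤ (maxCut (G n) : ℝ)) :
    (∀ᶠ n : ℕ in Filter.atTop,
        gibbsProb (G n) β (fun σ => (gCut (G n) σ : ℝ) ≤ α * (maxCut (G n) : ℝ)) ≤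
          Real.exp ((n : ℝ) * Real.log 2 - β * (1 - α) * c * (n : ℝ) ^ 2)) ∧
      Filter.Tendsto
        (fun n : ℕ =>
          gibbsProb (G n) β (fun σ => (gCut (G n) σ : ℝ) ≤ α * (maxCut (G n) : ℝ)))
        Filter.atTop (nhds 0) ∧
      ∀ ε : ℝ, 0 < ε → ε < β * (1 - α) * c →
        ∀ᶠ n : ℕ in Filter.atTop,
          gibbsProb (G n) β (fun σ => (gCut (G n) σ : ℝ) ≤ α * (maxCut (G n) : ℝ)) ≤
            Real.exp (-ε * (n : ℝ) ^ 2) :=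
  gibbs_beats_threshold_quadratic_general β α c hβ hα1 hc G hG
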